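/- Let A, B, C be complex vector spaces with decompositions B = ⊕_{q=1}^R B_q and C = ⊕_{r=1}^R C_r, dim B_p = dim C_p = L_p, and let A have basis elements such that a^{(p)} := a₁ + λᵖ a₂ for pairwise distinct nonzero scalars λ¹, …, λᴿ ∈ ℂ span pairwise distinct lines in a 2-dimensional space ⟨a₁,a₂⟩ ⊆ A. Fix bases (b_{p,j})_{j=1}^{L_p} of B_p and (c_{p,j})_{j=1}^{L_p} of C_p, and set φ_p = a^{(p)} ⊗ Σ_{j=1}^{L_p} b_{p,j} ⊗ c_{p,j}. Define W_p := A ⊗ ⟨Σⱼ b_{p,j}⊗c_{p,j}⟩ + ⟨a^{(p)}⟩ ⊗ B ⊗ C_p + ⟨a^{(p)}⟩ ⊗ B_p ⊗ C ⊆ A⊗B⊗C. Then W₁, …, W_R are in direct sum: W_p ∩ Σ_{q≠p} W_q = {0} for every p. -/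

import Mathlib

/-!
Split `A ⊗ B ⊗ C` into the blocks `A ⊗ B_q ⊗ C_r` using the projections of the two direct sum
decompositions. The `(q, r)`-block of `W_s` vanishes unless `s ∈ {q, r}`, and lies in
`a⁽ˢ⁾ ⊗ (B ⊗ C)` unless `q = r = s`, because `Σⱼ b_{s,j} ⊗ c_{s,j}` lives in the `(s, s)`-block.
So for `w ∈ W_p ∩ Σ_{s ≠ p} W_s` each block of `w` is either zero for one of these reasons or
lies in `a⁽ᵖ⁾ ⊗ (B ⊗ C) ∩ a⁽ᵗ⁾ ⊗ (B ⊗ C)` for some `t ≠ p`, which is zero since `a⁽ᵖ⁾` and `a⁽ᵗ⁾`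
are linearly independent.
-/

open TensorProduct

/-- The subspace `X ⊗ Y ⊗ Z` of `A ⊗ B ⊗ C`. -/
noncomputable def tp3 {A B C : Type*} [AddCommGroup A] [Module ℂ A]
    [AddCommGroup B] [Module ℂ B] [AddCommGroup C] [Module ℂ C]
    (X : Submodule ℂ A) (Y : Submodule ℂ B) (Z : Submodule ℂ C) :
    Submodule ℂ (A ⊗[ℂ] (B ⊗[ℂ] C)) :=
  Submodule.span ℂ {w | ∃ x ∈ X, ∃ y ∈ Y, ∃ z ∈ Z, w = x ⊗ₜ[ℂ] (y ⊗ₜ[ℂ] z)}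

/-- `A ⊗ ⟨θ⟩` for `θ ∈ B ⊗ C`. -/
noncomputable def modA {A B C : Type*} [AddCommGroup A] [Module ℂ A]
    [AddCommGroup B] [Module ℂ B] [AddCommGroup C] [Module ℂ C]
    (θ : B ⊗[ℂ] C) : Submodule ℂ (A ⊗[ℂ] (B ⊗[ℂ] C)) :=
  LinearMap.range ((TensorProduct.mk ℂ A (B ⊗[ℂ] C)).flip θ)

open Function Submodule

namespace DirectSum.IsInternal

variable {R ι M : Type*} [Semiring R] [AddCommMonoid M] [Module R M] [DecidableEq ι]
  {S : ι → Submodule R M}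

noncomputable def proj (h : IsInternal S) (i : ι) : M →ₗ[R] M :=
  (S i).subtype ∘ₗ component R ι (fun i => S i) i ∘ₗ
    (LinearEquiv.ofBijective (coeLinearMap S) h).symm.toLinearMap

theorem proj_apply (h : IsInternal S) (i : ι) (x : M) :
    h.proj i x = (LinearEquiv.ofBijective (coeLinearMap S) h).symm x i :=
  rfl

theorem proj_apply_of_mem (h : IsInternal S) {i : ι} {x : M} (hx : x ∈ S i) :
    h.proj i x = x := by
  rw [proj_apply, h.ofBijective_coeLinearMap_of_mem hx]

theorem proj_apply_of_mem_ne (h : IsInternal S) {i j : ι} (hij : i ≠ j) {x : M}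
    (hx : x ∈ S i) : h.proj j x = 0 := by
  rw [proj_apply, h.ofBijective_coeLinearMap_of_mem_ne hij hx, Submodule.coe_zero]

theorem map_proj_of_ne (h : IsInternal S) {i j : ι} (hij : i ≠ j) :
    (S i).map (h.proj j) = ⊥ :=
  eq_bot_iff.2 <| Submodule.map_le_iff_le_comap.2 fun _ hx => h.proj_apply_of_mem_ne hij hx

theorem sum_proj [Fintype ι] (h : IsInternal S) : ∑ i, h.proj i = LinearMap.id := by
  ext x
  set e := LinearEquiv.ofBijective (coeLinearMap S) h
  calc (∑ i, h.proj i) x = ∑ i, coeLinearMap S (of (fun i => S i) i (e.symm x i)) := by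
        simp only [LinearMap.sum_apply, proj_apply, coeLinearMap_of, e]
    _ = e (e.symm x) := by rw [← map_sum]; exact congrArg (coeLinearMap S) (sum_univ_of _)
    _ = x := e.apply_symm_apply x

end DirectSum.IsInternal

theorem sum_lTensor_map_eq_id {R A B C ι κ : Type*} [CommSemiring R]
    [AddCommMonoid A] [Module R A] [AddCommMonoid B] [Module R B]
    [AddCommMonoid C] [Module R C] [Fintype ι] [Fintype κ]
    {P : ι → B →ₗ[R] B} {Q : κ → C →ₗ[R] C}
    (hP : ∑ i, P i = LinearMap.id) (hQ : ∑ k, Q k = LinearMap.id) :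
    ∑ ik : ι × κ, (map (P ik.1) (Q ik.2)).lTensor A = LinearMap.id := by
  ext a y z
  have hPy : ∑ i, P i y = y := by rw [← LinearMap.sum_apply, hP, LinearMap.id_apply]
  have hQz : ∑ k, Q k z = z := by rw [← LinearMap.sum_apply, hQ, LinearMap.id_apply]
  simp [LinearMap.sum_apply, Fintype.sum_prod_type, ← tmul_sum, ← sum_tmul, hPy, hQz]

section

variable {R M : Type*} [Semiring R] [AddCommMonoid M] [Module R M]

theorem Submodule.disjoint_of_forall_disjoint_map {κ : Type*} [Fintype κ] {π : κ → M →ₗ[R] M}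
    (hπ : ∑ k, π k = LinearMap.id) {X Y : Submodule R M}
    (h : ∀ k, Disjoint (X.map (π k)) (Y.map (π k))) : Disjoint X Y := by
  rw [disjoint_def]
  intro x hX hY
  have hπx : ∀ k, π k x = 0 := fun k =>
    disjoint_def.1 (h k) _ (mem_map_of_mem hX) (mem_map_of_mem hY)
  calc x = (∑ k, π k) x := by rw [hπ, LinearMap.id_apply]
    _ = 0 := by simp only [LinearMap.sum_apply, hπx, Finset.sum_const_zero]

theorem disjoint_map_iSup_ne {N ι : Type*} [AddCommMonoid N] [Module R N]
    {W : ι → Submodule R M} {U : ι → Submodule R N} {f : M →ₗ[R] N}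
    (hU : Pairwise (Disjoint on U)) {q r : ι}
    (hzero : ∀ s, q ≠ s → r ≠ s → (W s).map f = ⊥)
    (hle : ∀ s, q ≠ s ∨ r ≠ s → (W s).map f ≤ U s) (p : ι) :
    Disjoint ((W p).map f) ((⨆ s : {s // s ≠ p}, W s).map f) := by
  rw [Submodule.map_iSup]
  -- the case where one of `q, r` is `p` and `t` is the other one
  have mixed : ∀ t, t ≠ p → (∀ s, p ≠ s → t ≠ s → (W s).map f = ⊥) →
      (∀ s, p ≠ s ∨ t ≠ s → (W s).map f ≤ U s) →
      Disjoint ((W p).map f) (⨆ s : {s // s ≠ p}, (W s).map f) := by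
    intro t htp hzero' hle'
    refine (hU htp.symm).mono (hle' p (Or.inr htp)) (iSup_le fun s => ?_)
    by_cases hst : (s : ι) = t
    · exact hst ▸ hle' s (Or.inl s.2.symm)
    · exact (hzero' s s.2.symm (Ne.symm hst)).trans_le bot_le
  by_cases hq : q = p <;> by_cases hr : r = p
  · exact disjoint_bot_right.mono_right
      (iSup_le fun s => (hzero s (fun h => s.2 (h ▸ hq)) (fun h => s.2 (h ▸ hr))).le)
  · subst hq
    exact mixed r hr hzero hle
  · subst hr
    exact mixed q hq (fun s hr hq => hzero s hq hr) (fun s h => hle s h.symm)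
  · simp [hzero p hq hr]

end

theorem disjoint_range_mk {K V M : Type*} [Field K] [AddCommGroup V] [Module K V]
    [AddCommGroup M] [Module K M] {x y : V} (h : LinearIndependent K ![x, y]) :
    Disjoint (LinearMap.range (mk K V M x)) (LinearMap.range (mk K V M y)) := by
  have hx : x ∉ Submodule.span K {y} := by
    simpa using (linearIndependent_finCons.1 h).2
  obtain ⟨f, hfx, hfy⟩ := Submodule.exists_le_ker_of_notMem hx
  rw [Submodule.disjoint_def]
  rintro _ ⟨u, rfl⟩ ⟨v, hv⟩
  have hu : f x • u = f y • v := by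
    simpa using congrArg ((TensorProduct.lid K M).toLinearMap ∘ₗ f.rTensor M) hv.symm
  rw [hfy (Submodule.mem_span_singleton_self y), zero_smul, smul_eq_zero] at hu
  simp [hu.resolve_left hfx]

section

variable {A B C B' C' : Type*} [AddCommGroup A] [Module ℂ A] [AddCommGroup B] [Module ℂ B]
  [AddCommGroup C] [Module ℂ C] [AddCommGroup B'] [Module ℂ B'] [AddCommGroup C'] [Module ℂ C']

theorem map_lTensor_modA (f : B ⊗[ℂ] C →ₗ[ℂ] B' ⊗[ℂ] C') (θ : B ⊗[ℂ] C) :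
    (modA (A := A) θ).map (f.lTensor A) = modA (f θ) := by
  simp only [modA, LinearMap.range_eq_map, ← Submodule.map_comp]
  congr 1

theorem modA_zero : modA (A := A) (0 : B ⊗[ℂ] C) = ⊥ := by
  simp [modA]

theorem map_lTensor_map_tp3_le (X : Submodule ℂ A) (Y : Submodule ℂ B) (Z : Submodule ℂ C)
    (f : B →ₗ[ℂ] B') (g : C →ₗ[ℂ] C') :
    (tp3 X Y Z).map ((map f g).lTensor A) ≤ tp3 X (Y.map f) (Z.map g) := by
  rw [tp3, map_span, span_le]
  rintro _ ⟨_, ⟨x, hx, y, hy, z, hz, rfl⟩, rfl⟩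
  exact subset_span ⟨x, hx, f y, mem_map_of_mem hy, g z, mem_map_of_mem hz, rfl⟩

theorem tp3_bot_middle (X : Submodule ℂ A) (Z : Submodule ℂ C) :
    tp3 X (⊥ : Submodule ℂ B) Z = ⊥ := by
  rw [tp3, span_eq_bot]
  rintro _ ⟨x, -, y, hy, z, -, rfl⟩
  simp [(mem_bot ℂ).1 hy]

theorem tp3_bot_right (X : Submodule ℂ A) (Y : Submodule ℂ B) :
    tp3 X Y (⊥ : Submodule ℂ C) = ⊥ := by
  rw [tp3, span_eq_bot]
  rintro _ ⟨x, -, y, -, z, hz, rfl⟩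
  simp [(mem_bot ℂ).1 hz]

theorem tp3_span_singleton_le (a : A) (Y : Submodule ℂ B) (Z : Submodule ℂ C) :
    tp3 (span ℂ {a}) Y Z ≤ LinearMap.range (mk ℂ A (B ⊗[ℂ] C) a) := by
  rw [tp3, span_le]
  rintro _ ⟨x, hx, y, -, z, -, rfl⟩
  obtain ⟨μ, rfl⟩ := mem_span_singleton.1 hx
  exact ⟨μ • y ⊗ₜ z, by rw [mk_apply, smul_tmul]⟩

/-- The affine tangent space at `a ⊗ θ` to the subspace variety, for `θ ∈ Y ⊗ Z`. -/
noncomputable def tangentSpace (a : A) (θ : B ⊗[ℂ] C) (Y : Submodule ℂ B) (Z : Submodule ℂ C) :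
    Submodule ℂ (A ⊗[ℂ] (B ⊗[ℂ] C)) :=
  modA θ ⊔ tp3 (span ℂ {a}) ⊤ Z ⊔ tp3 (span ℂ {a}) Y ⊤

variable {a : A} {θ : B ⊗[ℂ] C} {Y : Submodule ℂ B} {Z : Submodule ℂ C}
  {f : B →ₗ[ℂ] B'} {g : C →ₗ[ℂ] C'}

theorem map_tangentSpace_le_range_mk (hθ : map f g θ = 0) :
    (tangentSpace a θ Y Z).map ((map f g).lTensor A) ≤ LinearMap.range (mk ℂ A _ a) := by
  simp only [tangentSpace, Submodule.map_sup, map_lTensor_modA, hθ, modA_zero, bot_sup_eq]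
  exact sup_le ((map_lTensor_map_tp3_le _ _ _ f g).trans (tp3_span_singleton_le _ _ _))
    ((map_lTensor_map_tp3_le _ _ _ f g).trans (tp3_span_singleton_le _ _ _))

theorem map_tangentSpace_eq_bot (hθ : map f g θ = 0) (hY : Y.map f = ⊥) (hZ : Z.map g = ⊥) :
    (tangentSpace a θ Y Z).map ((map f g).lTensor A) = ⊥ := by
  simp only [tangentSpace, Submodule.map_sup, map_lTensor_modA, hθ, modA_zero, bot_sup_eq,
    ← le_bot_iff]
  exact sup_le (by simpa only [hZ, tp3_bot_right] using map_lTensor_map_tp3_le _ ⊤ Z f g)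
    (by simpa only [hY, tp3_bot_middle] using map_lTensor_map_tp3_le _ Y ⊤ f g)

end

theorem tangent_spaces_direct_sum_1LL_general {A B C : Type*}
    [AddCommGroup A] [Module ℂ A] [AddCommGroup B] [Module ℂ B]
    [AddCommGroup C] [Module ℂ C]
    (R : ℕ) (L : Fin R → ℕ)
    (a₁ a₂ : A) (ha : LinearIndependent ℂ ![a₁, a₂])
    (lam : Fin R → ℂ) (hlam : Function.Injective lam)
    (Bsub : Fin R → Submodule ℂ B) (Csub : Fin R → Submodule ℂ C)
    (hBindep : iSupIndep Bsub) (hBspan : (⨆ p, Bsub p) = ⊤)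
    (hCindep : iSupIndep Csub) (hCspan : (⨆ p, Csub p) = ⊤)
    (b : (p : Fin R) → Module.Basis (Fin (L p)) ℂ (Bsub p))
    (c : (p : Fin R) → Module.Basis (Fin (L p)) ℂ (Csub p))
    (W : Fin R → Submodule ℂ (A ⊗[ℂ] (B ⊗[ℂ] C)))
    (hW : ∀ p, W p =
      modA (∑ j : Fin (L p), (b p j : B) ⊗ₜ[ℂ] (c p j : C)) ⊔
        tp3 (Submodule.span ℂ {a₁ + lam p • a₂}) ⊤ (Csub p) ⊔
        tp3 (Submodule.span ℂ {a₁ + lam p • a₂}) (Bsub p) ⊤) :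
    ∀ p, W p ⊓ (⨆ q : {q : Fin R // q ≠ p}, W q) = ⊥ := by
  have hB := DirectSum.isInternal_submodule_of_iSupIndep_of_iSup_eq_top hBindep hBspan
  have hC := DirectSum.isInternal_submodule_of_iSupIndep_of_iSup_eq_top hCindep hCspan
  have hθ : ∀ s q r, q ≠ s ∨ r ≠ s →
      map (hB.proj q) (hC.proj r) (∑ j, (b s j : B) ⊗ₜ[ℂ] (c s j : C)) = 0 := by
    rintro s q r (hq | hr)
    · simp [hB.proj_apply_of_mem_ne (Ne.symm hq) (b s _).2]
    · simp [hC.proj_apply_of_mem_ne (Ne.symm hr) (c s _).2]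
  have hdisj :
      Pairwise (Disjoint on fun s => LinearMap.range (mk ℂ A (B ⊗[ℂ] C) (a₁ + lam s • a₂))) :=
    fun s t hst => disjoint_range_mk <| by
      simpa using (LinearIndependent.pair_add_smul_add_smul_iff (1 : ℂ) (lam s) 1 (lam t)).2
        ⟨by simpa using ha, by simpa using (hlam.ne hst).symm⟩
  intro p
  rw [← disjoint_iff]
  refine disjoint_of_forall_disjoint_map (sum_lTensor_map_eq_id hB.sum_proj hC.sum_proj) fun qr =>
    disjoint_map_iSup_ne (q := qr.1) (r := qr.2) hdisj (fun s hq hr => ?_) (fun s h => ?_) p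
  · rw [hW s]
    exact map_tangentSpace_eq_bot (hθ s _ _ (Or.inl hq)) (hB.map_proj_of_ne (Ne.symm hq))
      (hC.map_proj_of_ne (Ne.symm hr))
  · rw [hW s]
    exact map_tangentSpace_le_range_mk (hθ s _ _ h)

/-- With `B = ⊕ B_p`, `C = ⊕ C_p`, `dim B_p = dim C_p = L_p`, bases `b_{p,j}` of
`B_p`, `c_{p,j}` of `C_p`, pairwise distinct nonzero `λᵖ` and
`a⁽ᵖ⁾ = a₁ + λᵖ a₂` with `a₁, a₂` independent, the tangent spaces
`W_p = A⊗⟨Σⱼ b_{p,j}⊗c_{p,j}⟩ + ⟨a⁽ᵖ⁾⟩⊗B⊗C_p + ⟨a⁽ᵖ⁾⟩⊗B_p⊗C`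
are in direct sum: `W_p ∩ Σ_{q≠p} W_q = 0` for all `p`. -/
theorem tangent_spaces_direct_sum_1LL {A B C : Type*}
    [AddCommGroup A] [Module ℂ A] [AddCommGroup B] [Module ℂ B]
    [AddCommGroup C] [Module ℂ C]
    [FiniteDimensional ℂ A] [FiniteDimensional ℂ B] [FiniteDimensional ℂ C]
    (R : ℕ) (L : Fin R → ℕ)
    (a₁ a₂ : A) (ha : LinearIndependent ℂ ![a₁, a₂])
    (lam : Fin R → ℂ) (hlam0 : ∀ p, lam p ≠ 0) (hlam : Function.Injective lam)
    (Bsub : Fin R → Submodule ℂ B) (Csub : Fin R → Submodule ℂ C)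
    (hBindep : iSupIndep Bsub) (hBspan : (⨆ p, Bsub p) = ⊤)
    (hCindep : iSupIndep Csub) (hCspan : (⨆ p, Csub p) = ⊤)
    (b : (p : Fin R) → Module.Basis (Fin (L p)) ℂ (Bsub p))
    (c : (p : Fin R) → Module.Basis (Fin (L p)) ℂ (Csub p))
    (W : Fin R → Submodule ℂ (A ⊗[ℂ] (B ⊗[ℂ] C)))
    (hW : ∀ p, W p =
      modA (∑ j : Fin (L p), (b p j : B) ⊗ₜ[ℂ] (c p j : C)) ⊔
        tp3 (Submodule.span ℂ {a₁ + lam p • a₂}) ⊤ (Csub p) ⊔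
        tp3 (Submodule.span ℂ {a₁ + lam p • a₂}) (Bsub p) ⊤) :
    ∀ p, W p ⊓ (⨆ q : {q : Fin R // q ≠ p}, W q) = ⊥ :=
  tangent_spaces_direct_sum_1LL_general R L a₁ a₂ ha lam hlam Bsub Csub hBindep hBspan hCindep
    hCspan b c W hW
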